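/- arXiv:math/0609231 — 4 statements merged into one kernel-verified Lean document; each statement's English description precedes it below -/
import Mathlib

section
/- For every real δ, the function u^δ(t,x) = R_{δt} M_0(x + δt) is a solution of the controlled Landau-Lifschitz equation u_t = -u ∧ h(u) - u ∧ (u ∧ h(u)) - δ(u ∧ e_1 + u ∧ (u ∧ e_1)), where R_θ is the rotation of angle θ about the axis ℝe_1. -/
open Real

private lemma hasDerivAt_vec3 {f g k : ℝ → ℝ} {f' g' k' : ℝ} {x : ℝ}
    (hf : HasDerivAt f f' x) (hg : HasDerivAt g g' x) (hk : HasDerivAt k k' x) :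
    HasDerivAt (fun y => ![f y, g y, k y] : ℝ → Fin 3 → ℝ) ![f', g', k'] x := by
  rw [hasDerivAt_pi]
  intro i
  fin_cases i <;> simpa

private lemma hd_tanh (y : ℝ) : HasDerivAt Real.tanh (1 / Real.cosh y ^ 2) y := by
  have h := (Real.hasDerivAt_sinh y).div (Real.hasDerivAt_cosh y) ((Real.cosh_pos y).ne')
  have : (fun x => Real.sinh x / Real.cosh x) = Real.tanh := by
    funext x; rw [Real.tanh_eq_sinh_div_cosh]
  replace h : HasDerivAt Real.tanh ((Real.cosh y * Real.cosh y - Real.sinh y * Real.sinh y) / Real.cosh y ^ 2) y := by rw [← this]; exact h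
  convert h using 1
  have h1 := Real.cosh_sq y
  field_simp
  nlinarith [h1]

private lemma hd_sech (y : ℝ) :
    HasDerivAt (fun x => 1 / Real.cosh x) (-(Real.sinh y / Real.cosh y ^ 2)) y := by
  have h := (hasDerivAt_const y (1:ℝ)).div (Real.hasDerivAt_cosh y) ((Real.cosh_pos y).ne')
  replace h : HasDerivAt (fun x => 1 / Real.cosh x) _ y := h
  convert h using 1
  field_simp
  ring

private lemma hd_sech2 (y : ℝ) :
    HasDerivAt (fun x => 1 / Real.cosh x ^ 2) (-(2 * Real.sinh y / Real.cosh y ^ 3)) y := by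
  have hc : HasDerivAt (fun x => Real.cosh x ^ 2) (2 * Real.cosh y ^ 1 * Real.sinh y) y :=
    (Real.hasDerivAt_cosh y).pow 2
  have h := (hasDerivAt_const y (1:ℝ)).div hc (pow_ne_zero 2 ((Real.cosh_pos y).ne'))
  replace h : HasDerivAt (fun x => 1 / Real.cosh x ^ 2) _ y := h
  convert h using 1
  have hne := (Real.cosh_pos y).ne'
  field_simp
  ring

private lemma hd_sech' (y : ℝ) :
    HasDerivAt (fun x => -(Real.sinh x / Real.cosh x ^ 2))
      (1 / Real.cosh y - 2 / Real.cosh y ^ 3) y := by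
  have hc : HasDerivAt (fun x => Real.cosh x ^ 2) (2 * Real.cosh y ^ 1 * Real.sinh y) y :=
    (Real.hasDerivAt_cosh y).pow 2
  have h := ((Real.hasDerivAt_sinh y).div hc (pow_ne_zero 2 ((Real.cosh_pos y).ne'))).neg
  replace h : HasDerivAt (fun x => -(Real.sinh x / Real.cosh x ^ 2)) _ y := h
  convert h using 1
  have hne := (Real.cosh_pos y).ne'
  have h1 := Real.cosh_sq y
  field_simp
  linear_combination 2 * h1

/-- For every `δ`, the travelling wall `u^δ(t,x) = R_{δt} M₀(x + δt)` solves the controlled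
Landau-Lifschitz equation
`u_t = -u ∧ h(u) - u ∧ (u ∧ h(u)) - δ (u ∧ e₁ + u ∧ (u ∧ e₁))`. -/
theorem travelling_wall_solves_LL (δ : ℝ) :
    let M0 : ℝ → Fin 3 → ℝ := fun x => ![Real.tanh x, 0, 1 / Real.cosh x]
    let R : ℝ → (Fin 3 → ℝ) → Fin 3 → ℝ :=
      fun θ v => ![v 0, Real.cos θ * v 1 - Real.sin θ * v 2,
                   Real.sin θ * v 1 + Real.cos θ * v 2]
    let e1 : Fin 3 → ℝ := ![1, 0, 0]
    let e2 : Fin 3 → ℝ := ![0, 1, 0]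
    let e3 : Fin 3 → ℝ := ![0, 0, 1]
    let u : ℝ → ℝ → Fin 3 → ℝ := fun t x => R (δ * t) (M0 (x + δ * t))
    let h : (ℝ → Fin 3 → ℝ) → ℝ → Fin 3 → ℝ :=
      fun w x => deriv (deriv w) x - w x 1 • e2 - w x 2 • e3
    ∀ t x : ℝ,
      deriv (fun s => u s x) t =
        -(crossProduct (u t x) (h (u t) x))
        - crossProduct (u t x) (crossProduct (u t x) (h (u t) x))
        - δ • (crossProduct (u t x) e1 + crossProduct (u t x) (crossProduct (u t x) e1)) := by
  intro M0 R e1 e2 e3 u h t x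
  have hne : ∀ y : ℝ, Real.cosh y ≠ 0 := fun y => (Real.cosh_pos y).ne'
  -- rewrite u t as explicit vector function
  have hu : u t = fun y => ![Real.tanh (y + δ * t),
      -Real.sin (δ * t) * (1 / Real.cosh (y + δ * t)),
      Real.cos (δ * t) * (1 / Real.cosh (y + δ * t))] := by
    funext y
    show R (δ * t) (M0 (y + δ * t)) = _
    simp only [R, M0]
    ext i
    fin_cases i <;> simp
  -- inner function derivative helper: x ↦ f (x + a)
  have hadd : ∀ (a y : ℝ), HasDerivAt (fun z : ℝ => z + a) 1 y :=
    fun a y => (hasDerivAt_id y).add_const a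
  -- first spatial derivative
  have hd1 : deriv (u t) = fun y => ![1 / Real.cosh (y + δ * t) ^ 2,
      -Real.sin (δ * t) * (-(Real.sinh (y + δ * t) / Real.cosh (y + δ * t) ^ 2)),
      Real.cos (δ * t) * (-(Real.sinh (y + δ * t) / Real.cosh (y + δ * t) ^ 2))] := by
    rw [hu]
    funext y
    have h0 : HasDerivAt (fun z : ℝ => Real.tanh (z + δ * t))
        (1 / Real.cosh (y + δ * t) ^ 2) y := by
      simpa [Function.comp_def] using (hd_tanh (y + δ * t)).comp y (hadd (δ * t) y)
    have hs : HasDerivAt (fun z : ℝ => 1 / Real.cosh (z + δ * t))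
        (-(Real.sinh (y + δ * t) / Real.cosh (y + δ * t) ^ 2)) y := by
      simpa [Function.comp_def] using (hd_sech (y + δ * t)).comp y (hadd (δ * t) y)
    exact (hasDerivAt_vec3 h0 (hs.const_mul _) (hs.const_mul _)).deriv
  -- second spatial derivative at x
  have hd2 : deriv (deriv (u t)) x = ![-(2 * Real.sinh (x + δ * t) / Real.cosh (x + δ * t) ^ 3),
      -Real.sin (δ * t) * (1 / Real.cosh (x + δ * t) - 2 / Real.cosh (x + δ * t) ^ 3),
      Real.cos (δ * t) * (1 / Real.cosh (x + δ * t) - 2 / Real.cosh (x + δ * t) ^ 3)] := by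
    rw [hd1]
    have h0 : HasDerivAt (fun z : ℝ => 1 / Real.cosh (z + δ * t) ^ 2)
        (-(2 * Real.sinh (x + δ * t) / Real.cosh (x + δ * t) ^ 3)) x := by
      simpa [Function.comp_def] using (hd_sech2 (x + δ * t)).comp x (hadd (δ * t) x)
    have hs : HasDerivAt (fun z : ℝ => -(Real.sinh (z + δ * t) / Real.cosh (z + δ * t) ^ 2))
        (1 / Real.cosh (x + δ * t) - 2 / Real.cosh (x + δ * t) ^ 3) x := by
      simpa [Function.comp_def] using (hd_sech' (x + δ * t)).comp x (hadd (δ * t) x)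
    exact (hasDerivAt_vec3 h0 (hs.const_mul _) (hs.const_mul _)).deriv
  -- time derivative
  have hut : (fun s => u s x) = fun s => ![Real.tanh (x + δ * s),
      -Real.sin (δ * s) * (1 / Real.cosh (x + δ * s)),
      Real.cos (δ * s) * (1 / Real.cosh (x + δ * s))] := by
    funext s
    show R (δ * s) (M0 (x + δ * s)) = _
    simp only [R, M0]
    ext i
    fin_cases i <;> simp
  have hin : HasDerivAt (fun s : ℝ => x + δ * s) δ t := by
    simpa using ((hasDerivAt_id t).const_mul δ).const_add x
  have hdt : deriv (fun s => u s x) t = ![δ * (1 / Real.cosh (x + δ * t) ^ 2),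
      -(δ * Real.cos (δ * t)) * (1 / Real.cosh (x + δ * t))
        + -Real.sin (δ * t) * (-(Real.sinh (x + δ * t) / Real.cosh (x + δ * t) ^ 2) * δ),
      -(δ * Real.sin (δ * t)) * (1 / Real.cosh (x + δ * t))
        + Real.cos (δ * t) * (-(Real.sinh (x + δ * t) / Real.cosh (x + δ * t) ^ 2) * δ)] := by
    rw [hut]
    have h0 : HasDerivAt (fun s : ℝ => Real.tanh (x + δ * s))
        (δ * (1 / Real.cosh (x + δ * t) ^ 2)) t := by
      simpa [mul_comm, Function.comp_def] using (hd_tanh (x + δ * t)).comp t hin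
    have hsc : HasDerivAt (fun s : ℝ => 1 / Real.cosh (x + δ * s))
        (-(Real.sinh (x + δ * t) / Real.cosh (x + δ * t) ^ 2) * δ) t := by
      have := (hd_sech (x + δ * t)).comp t hin; exact this
    have hsin : HasDerivAt (fun s : ℝ => -Real.sin (δ * s)) (-(δ * Real.cos (δ * t))) t := by
      have := (Real.hasDerivAt_sin (δ * t)).comp t (((hasDerivAt_id t).const_mul δ))
      simpa [mul_comm, Function.comp_def, Pi.neg_def] using this.neg
    have hcos : HasDerivAt (fun s : ℝ => Real.cos (δ * s)) (-(δ * Real.sin (δ * t))) t := by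
      have := (Real.hasDerivAt_cos (δ * t)).comp t (((hasDerivAt_id t).const_mul δ))
      simpa [mul_comm, Function.comp_def] using this
    exact (hasDerivAt_vec3 h0 (hsin.mul hsc) (hcos.mul hsc)).deriv
  rw [hdt]
  simp only [h]
  rw [hd2]
  have hux : u t x = ![Real.tanh (x + δ * t),
      -Real.sin (δ * t) * (1 / Real.cosh (x + δ * t)),
      Real.cos (δ * t) * (1 / Real.cosh (x + δ * t))] := by rw [hu]
  set y := x + δ * t with hy
  have hcy : Real.cosh y ≠ 0 := (Real.cosh_pos y).ne'
  have hH : (![-(2 * Real.sinh y / Real.cosh y ^ 3),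
      -Real.sin (δ * t) * (1 / Real.cosh y - 2 / Real.cosh y ^ 3),
      Real.cos (δ * t) * (1 / Real.cosh y - 2 / Real.cosh y ^ 3)] : Fin 3 → ℝ)
      - u t x 1 • e2 - u t x 2 • e3 = (-(2 / Real.cosh y ^ 2)) • u t x := by
    rw [hux]
    ext i
    fin_cases i <;>
      simp [e2, e3, Real.tanh_eq_sinh_div_cosh] <;>
      field_simp <;> first | tauto | ring
  rw [hH]
  have hz : crossProduct (u t x) ((-(2 / Real.cosh y ^ 2)) • u t x) = 0 := by
    rw [LinearMap.map_smul, cross_self, smul_zero]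
  rw [hz]
  simp only [neg_zero, LinearMap.map_zero, sub_zero, zero_sub, zero_add]
  rw [hux]
  have hsc := Real.sin_sq_add_cos_sq (δ * t)
  ext i
  fin_cases i
  · simp [e1, cross_apply, Real.tanh_eq_sinh_div_cosh, Pi.smul_apply, smul_eq_mul]
    field_simp
    linear_combination (-δ) * hsc
  · simp [e1, cross_apply, Real.tanh_eq_sinh_div_cosh, Pi.smul_apply, smul_eq_mul]
    field_simp
    ring
  · simp [e1, cross_apply, Real.tanh_eq_sinh_div_cosh, Pi.smul_apply, smul_eq_mul]
    field_simp
    ring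
end

section
/- If u(t,x) solves u_t = -u ∧ h(u) - u ∧ (u ∧ h(u)) - δ(u ∧ e_1 + u ∧ (u ∧ e_1)) with constant δ, then v(t,x) = R_{-δt} u(t, x - δt) solves v_t = -v ∧ h(v) - v ∧ (v ∧ h(v)) - δ(v_x + v_1 v - e_1), provided |u| ≡ 1. -/
open Real


private def rot (c s : ℝ) (w : Fin 3 → ℝ) : Fin 3 → ℝ :=
  ![w 0, c * w 1 - s * w 2, s * w 1 + c * w 2]

private lemma rot_cross (c s : ℝ) (h1 : c ^ 2 + s ^ 2 = 1) (a b : Fin 3 → ℝ) :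
    crossProduct (rot c s a) (rot c s b) = rot c s (crossProduct a b) := by
  funext i
  fin_cases i <;>
    simp [rot, cross_apply] <;>
    first
      | linear_combination (a 1 * b 2 - a 2 * b 1) * h1
      | linear_combination (a 2 * b 1 - a 1 * b 2) * h1
      | ring

private lemma rot_e1 (c s : ℝ) : rot c s ![1, 0, 0] = ![1, 0, 0] := by
  funext i; fin_cases i <;> simp [rot]

private lemma rot_smul (c s r : ℝ) (w : Fin 3 → ℝ) :
    rot c s (r • w) = r • rot c s w := by
  funext i; fin_cases i <;> simp [rot, Matrix.vecHead, Matrix.vecTail] <;> ring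

private lemma rot_add (c s : ℝ) (w z : Fin 3 → ℝ) :
    rot c s (w + z) = rot c s w + rot c s z := by
  funext i; fin_cases i <;> simp [rot, Matrix.vecHead, Matrix.vecTail] <;> ring

private lemma rot_sub (c s : ℝ) (w z : Fin 3 → ℝ) :
    rot c s (w - z) = rot c s w - rot c s z := by
  funext i; fin_cases i <;> simp [rot, Matrix.vecHead, Matrix.vecTail] <;> ring

private lemma rot_neg (c s : ℝ) (w : Fin 3 → ℝ) :
    rot c s (-w) = -rot c s w := by
  funext i; fin_cases i <;> simp [rot, Matrix.vecHead, Matrix.vecTail] <;> ring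

private lemma cross_cross_e1 (w : Fin 3 → ℝ) (hn : w 0 ^ 2 + w 1 ^ 2 + w 2 ^ 2 = 1) :
    crossProduct w (crossProduct w ![1, 0, 0]) = w 0 • w - ![1, 0, 0] := by
  funext i
  fin_cases i <;> simp [cross_apply] <;> linear_combination -hn

private lemma rot_h (c s : ℝ) (d a : Fin 3 → ℝ) :
    rot c s d - rot c s a 1 • ![(0:ℝ), 1, 0] - rot c s a 2 • ![(0:ℝ), 0, 1]
      = rot c s (d - a 1 • ![(0:ℝ), 1, 0] - a 2 • ![(0:ℝ), 0, 1]) := by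
  funext i; fin_cases i <;> simp [rot, Matrix.vecHead, Matrix.vecTail] <;> ring

private lemma rot_norm (c s : ℝ) (h1 : c ^ 2 + s ^ 2 = 1) (a : Fin 3 → ℝ)
    (hn : a 0 ^ 2 + a 1 ^ 2 + a 2 ^ 2 = 1) :
    rot c s a 0 ^ 2 + rot c s a 1 ^ 2 + rot c s a 2 ^ 2 = 1 := by
  simp only [rot]
  simp
  linear_combination hn + (a 1 ^ 2 + a 2 ^ 2) * h1

private lemma final_algebra (C S δ : ℝ) (h1 : C ^ 2 + S ^ 2 = 1) (a q b : Fin 3 → ℝ)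
    (hn : a 0 ^ 2 + a 1 ^ 2 + a 2 ^ 2 = 1) :
    δ • crossProduct (rot C S a) ![1, 0, 0]
      + rot C S (-(crossProduct a q) - crossProduct a (crossProduct a q)
          - δ • (crossProduct a ![1, 0, 0] + crossProduct a (crossProduct a ![1, 0, 0]))
          - δ • b)
    = -(crossProduct (rot C S a) (rot C S q))
      - crossProduct (rot C S a) (crossProduct (rot C S a) (rot C S q))
      - δ • (rot C S b + rot C S a 0 • rot C S a - ![1, 0, 0]) := by
  rw [rot_sub, rot_sub, rot_sub, rot_neg, rot_smul, rot_smul, rot_add,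
    ← rot_cross C S h1 a (crossProduct a ![1, 0, 0]), ← rot_cross C S h1 a ![1, 0, 0],
    ← rot_cross C S h1 a (crossProduct a q), ← rot_cross C S h1 a q, rot_e1,
    cross_cross_e1 _ (rot_norm C S h1 a hn)]
  module

/-- If `u` solves the controlled Landau-Lifschitz equation with constant control `δ` and
`|u| ≡ 1`, then `v(t,x) = R_{-δt} u(t, x - δt)` solves
`v_t = -v ∧ h(v) - v ∧ (v ∧ h(v)) - δ (v_x + v₁ v - e₁)`. -/
theorem moving_frame_equation (δ : ℝ) (u : ℝ → ℝ → Fin 3 → ℝ)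
    (hreg : ContDiff ℝ (⊤ : ℕ∞) (fun p : ℝ × ℝ => u p.1 p.2))
    (hnorm : ∀ t x : ℝ, (∑ i, u t x i * u t x i) = 1) :
    let R : ℝ → (Fin 3 → ℝ) → Fin 3 → ℝ :=
      fun θ w => ![w 0, Real.cos θ * w 1 - Real.sin θ * w 2,
                   Real.sin θ * w 1 + Real.cos θ * w 2]
    let e1 : Fin 3 → ℝ := ![1, 0, 0]
    let e2 : Fin 3 → ℝ := ![0, 1, 0]
    let e3 : Fin 3 → ℝ := ![0, 0, 1]
    let h : (ℝ → Fin 3 → ℝ) → ℝ → Fin 3 → ℝ :=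
      fun w x => deriv (deriv w) x - w x 1 • e2 - w x 2 • e3
    let v : ℝ → ℝ → Fin 3 → ℝ := fun t x => R (-(δ * t)) (u t (x - δ * t))
    (∀ t x : ℝ,
      deriv (fun s => u s x) t =
        -(crossProduct (u t x) (h (u t) x))
        - crossProduct (u t x) (crossProduct (u t x) (h (u t) x))
        - δ • (crossProduct (u t x) e1 + crossProduct (u t x) (crossProduct (u t x) e1))) →
    (∀ t x : ℝ,
      deriv (fun s => v s x) t =
        -(crossProduct (v t x) (h (v t) x))
        - crossProduct (v t x) (crossProduct (v t x) (h (v t) x))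
        - δ • (deriv (v t) x + v t x 0 • v t x - e1)) := by
  intro R e1 e2 e3 h v heq t x
  -- abbreviations for rotation coefficients
  have h1 : Real.cos (-(δ * t)) ^ 2 + Real.sin (-(δ * t)) ^ 2 = 1 := by
    have := Real.sin_sq_add_cos_sq (-(δ * t)); linarith
  set C := Real.cos (-(δ * t)) with hC
  set S := Real.sin (-(δ * t)) with hS
  -- smoothness in x for fixed time
  have hu2 : ∀ τ : ℝ, ContDiff ℝ (⊤ : ℕ∞) (u τ) := fun τ =>
    (hreg.of_le (by simp)).comp ((contDiff_const (c := τ)).prodMk contDiff_id)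
  have hud : ∀ τ : ℝ, Differentiable ℝ (u τ) := fun τ =>
    (hu2 τ).differentiable (by simp)
  have hud2 : ∀ τ : ℝ, Differentiable ℝ (deriv (u τ)) := fun τ =>
    ((contDiff_infty_iff_deriv.mp (hu2 τ)).2).differentiable (by simp)
  -- componentwise x-derivatives
  have hxc : ∀ (τ z : ℝ) (i : Fin 3),
      HasDerivAt (fun z => u τ z i) (deriv (u τ) z i) z :=
    fun τ z i => hasDerivAt_pi.1 ((hud τ z).hasDerivAt) i
  have hxc2 : ∀ (τ z : ℝ) (i : Fin 3),
      HasDerivAt (fun z => deriv (u τ) z i) (deriv (deriv (u τ)) z i) z :=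
    fun τ z i => hasDerivAt_pi.1 ((hud2 τ z).hasDerivAt) i
  have hsh : ∀ (z : ℝ) (i : Fin 3),
      HasDerivAt (fun z => u t (z - δ * t) i) (deriv (u t) (z - δ * t) i) z := by
    intro z i
    have := (hxc t (z - δ * t) i).comp z ((hasDerivAt_id z).sub_const (δ * t))
    simpa [Function.comp_def] using this
  have hsh2 : ∀ (z : ℝ) (i : Fin 3),
      HasDerivAt (fun z => deriv (u t) (z - δ * t) i)
        (deriv (deriv (u t)) (z - δ * t) i) z := by
    intro z i
    have := (hxc2 t (z - δ * t) i).comp z ((hasDerivAt_id z).sub_const (δ * t))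
    simpa [Function.comp_def] using this
  -- x-derivative of v t
  have hvx : ∀ z : ℝ, HasDerivAt (v t) (rot C S (deriv (u t) (z - δ * t))) z := by
    intro z
    apply hasDerivAt_pi.2
    intro i
    fin_cases i
    · simpa [v, R, rot, hC, hS] using hsh z 0
    · simpa [v, R, rot, hC, hS, Pi.sub_def, Pi.add_def] using ((hsh z 1).const_mul C).sub ((hsh z 2).const_mul S)
    · simpa [v, R, rot, hC, hS, Pi.sub_def, Pi.add_def] using ((hsh z 1).const_mul S).add ((hsh z 2).const_mul C)
  have hvd : deriv (v t) = fun z => rot C S (deriv (u t) (z - δ * t)) :=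
    funext fun z => (hvx z).deriv
  -- second x-derivative of v t
  have hvxx : HasDerivAt (deriv (v t))
      (rot C S (deriv (deriv (u t)) (x - δ * t))) x := by
    rw [hvd]
    apply hasDerivAt_pi.2
    intro i
    fin_cases i
    · simpa [rot] using hsh2 x 0
    · simpa [rot, Pi.sub_def, Pi.add_def] using ((hsh2 x 1).const_mul C).sub ((hsh2 x 2).const_mul S)
    · simpa [rot, Pi.sub_def, Pi.add_def] using ((hsh2 x 1).const_mul S).add ((hsh2 x 2).const_mul C)
  -- two-variable derivative setup
  have hFd : DifferentiableAt ℝ (fun p : ℝ × ℝ => u p.1 p.2) (t, x - δ * t) :=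
    (hreg.differentiable (by simp)) _
  set L := fderiv ℝ (fun p : ℝ × ℝ => u p.1 p.2) (t, x - δ * t) with hL
  have hF : HasFDerivAt (fun p : ℝ × ℝ => u p.1 p.2) L (t, x - δ * t) := hFd.hasFDerivAt
  have hcurve1 : HasDerivAt (fun s : ℝ => (s, x - δ * t)) ((1 : ℝ), (0 : ℝ)) t :=
    (hasDerivAt_id t).prodMk (hasDerivAt_const t _)
  have hut : HasDerivAt (fun s => u s (x - δ * t)) (L (1, 0)) t :=
    by have := hF.comp_hasDerivAt t hcurve1; exact this
  have hcurve2 : HasDerivAt (fun s : ℝ => (s, x - δ * s)) ((1 : ℝ), -δ) t := by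
    refine (hasDerivAt_id t).prodMk ?_
    simpa using (((hasDerivAt_id t).const_mul δ).const_sub x)
  have hw : HasDerivAt (fun s => u s (x - δ * s)) (L (1, -δ)) t :=
    by have := hF.comp_hasDerivAt t hcurve2; exact this
  have hcurve3 : HasDerivAt (fun z : ℝ => (t, z)) ((0 : ℝ), (1 : ℝ)) (x - δ * t) :=
    (hasDerivAt_const _ _).prodMk (hasDerivAt_id _)
  have hux : HasDerivAt (u t) (L (0, 1)) (x - δ * t) :=
    hF.comp_hasDerivAt _ hcurve3
  have hb : deriv (u t) (x - δ * t) = L (0, 1) := hux.deriv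
  have hW : L (1, -δ) = L (1, 0) - δ • L (0, 1) := by
    have hpt : ((1 : ℝ), -δ) = ((1 : ℝ), (0 : ℝ)) - δ • ((0 : ℝ), (1 : ℝ)) := by
      simp [Prod.ext_iff]
    rw [hpt, map_sub, map_smul]
  have hT := heq t (x - δ * t)
  rw [hut.deriv] at hT
  -- componentwise t-derivative of v
  have hwc : ∀ i : Fin 3,
      HasDerivAt (fun s => u s (x - δ * s) i) (L (1, -δ) i) t :=
    fun i => hasDerivAt_pi.1 hw i
  have hcos : HasDerivAt (fun s : ℝ => Real.cos (-(δ * s))) (S * δ) t := by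
    have hpar : HasDerivAt (fun s : ℝ => -(δ * s)) (-δ) t := by
      simpa [Pi.neg_def] using ((hasDerivAt_id t).const_mul δ).neg
    have h2 : HasDerivAt (fun s : ℝ => Real.cos (-(δ * s)))
        (-Real.sin (-(δ * t)) * -δ) t := by have := (Real.hasDerivAt_cos (-(δ * t))).comp t hpar; exact this
    convert h2 using 1
    rw [hS]; ring
  have hsin : HasDerivAt (fun s : ℝ => Real.sin (-(δ * s))) (-(C * δ)) t := by
    have hpar : HasDerivAt (fun s : ℝ => -(δ * s)) (-δ) t := by
      simpa [Pi.neg_def] using ((hasDerivAt_id t).const_mul δ).neg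
    have h2 : HasDerivAt (fun s : ℝ => Real.sin (-(δ * s)))
        (Real.cos (-(δ * t)) * -δ) t := by have := (Real.hasDerivAt_sin (-(δ * t))).comp t hpar; exact this
    convert h2 using 1
    rw [hC]; ring
  have hVt : HasDerivAt (fun s => v s x)
      (δ • crossProduct (v t x) e1 + rot C S (L (1, -δ))) t := by
    apply hasDerivAt_pi.2
    intro i
    fin_cases i
    · have H := hwc 0
      refine H.congr_deriv ?_
      simp [v, R, rot, e1, cross_apply]
    · have H := (hcos.mul (hwc 1)).sub (hsin.mul (hwc 2))
      refine H.congr_deriv ?_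
      · simp [v, R, rot, e1, cross_apply, hC, hS]
        ring
    · have H := (hsin.mul (hwc 1)).add (hcos.mul (hwc 2))
      refine H.congr_deriv ?_
      · simp [v, R, rot, e1, cross_apply, hC, hS]
        ring
  -- the transformed field h
  have hv_eq : v t x = rot C S (u t (x - δ * t)) := rfl
  have hvt_h : h (v t) x = rot C S (h (u t) (x - δ * t)) := by
    show deriv (deriv (v t)) x - v t x 1 • e2 - v t x 2 • e3 = _
    rw [hvxx.deriv, hv_eq]
    have he2 : e2 = ![(0 : ℝ), 1, 0] := rfl
    have he3 : e3 = ![(0 : ℝ), 0, 1] := rfl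
    rw [he2, he3, rot_h]
  -- norm of u
  have hn : u t (x - δ * t) 0 ^ 2 + u t (x - δ * t) 1 ^ 2 + u t (x - δ * t) 2 ^ 2 = 1 := by
    have := hnorm t (x - δ * t)
    rw [Fin.sum_univ_three] at this
    nlinarith [this]
  -- assemble
  rw [hVt.deriv, hW, hT, ← hb, hvt_h, hv_eq, congrFun hvd x]
  have he1 : e1 = ![(1 : ℝ), 0, 0] := rfl
  rw [he1]
  exact final_algebra C S δ h1 (u t (x - δ * t)) (h (u t) (x - δ * t))
    (deriv (u t) (x - δ * t)) hn
end

section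
/- The operator L = ∂_xx + (1 - 2 tanh² x) is nonpositive on L²(ℝ): for every f ∈ H²(ℝ), ⟨Lf, f⟩_{L²} = -‖f' + tanh(x) f‖²_{L²} ≤ 0. -/
open Real MeasureTheory

lemma integrable_mul_L2 {f g : ℝ → ℝ} (hf : MemLp f 2 (volume : Measure ℝ))
    (hg : MemLp g 2 (volume : Measure ℝ)) :
    Integrable (fun x => f x * g x) (volume : Measure ℝ) := by
  have h : MemLp (f • g) 1 (volume : Measure ℝ) :=
    hg.smul hf
  exact memLp_one_iff_integrable.mp h

lemma hasDerivAt_tanh' (x : ℝ) : HasDerivAt Real.tanh (1 - Real.tanh x ^ 2) x := by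
  have hc : Real.cosh x ≠ 0 := (Real.cosh_pos x).ne'
  have h := (Real.hasDerivAt_sinh x).fun_div (Real.hasDerivAt_cosh x) hc
  have he : Real.tanh = fun y => Real.sinh y / Real.cosh y :=
    funext fun y => Real.tanh_eq_sinh_div_cosh y
  rw [he]
  refine h.congr_deriv ?_
  have hid : Real.cosh x ^ 2 - Real.sinh x ^ 2 = 1 := Real.cosh_sq_sub_sinh_sq x
  simp only
  field_simp

lemma continuous_tanh' : Continuous Real.tanh := by
  have he : Real.tanh = fun y => Real.sinh y / Real.cosh y :=
    funext fun y => Real.tanh_eq_sinh_div_cosh y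
  rw [he]
  exact Real.continuous_sinh.div Real.continuous_cosh fun x => (Real.cosh_pos x).ne'

lemma abs_tanh_le_one (x : ℝ) : |Real.tanh x| ≤ 1 := by
  have hid : Real.cosh x ^ 2 - Real.sinh x ^ 2 = 1 := Real.cosh_sq_sub_sinh_sq x
  have hc : 0 < Real.cosh x := Real.cosh_pos x
  have habs : |Real.sinh x| ≤ Real.cosh x := by
    nlinarith [sq_abs (Real.sinh x), abs_nonneg (Real.sinh x)]
  rw [Real.tanh_eq_sinh_div_cosh, abs_div, abs_of_pos hc, div_le_one hc]
  exact habs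

/-- The operator `L = ∂ₓₓ + (1 - 2 tanh² x)` is nonpositive on `L²(ℝ)`:
for `f ∈ H²(ℝ)`, `⟨Lf, f⟩ = -‖f' + tanh·f‖² ≤ 0`. -/
theorem L_nonpositive (f : ℝ → ℝ) (hf : ContDiff ℝ 2 f)
    (hf0 : MemLp f 2 (volume : Measure ℝ))
    (hf1 : MemLp (deriv f) 2 (volume : Measure ℝ))
    (hf2 : MemLp (deriv (deriv f)) 2 (volume : Measure ℝ)) :
    (∫ x : ℝ, (deriv (deriv f) x + (1 - 2 * Real.tanh x ^ 2) * f x) * f x)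
      = -∫ x : ℝ, (deriv f x + Real.tanh x * f x) ^ 2 ∧
    (∫ x : ℝ, (deriv (deriv f) x + (1 - 2 * Real.tanh x ^ 2) * f x) * f x) ≤ 0 := by
  have hfc : Continuous f := hf.continuous
  have hf1' : ContDiff ℝ 1 (deriv f) := by
    have h2 : ContDiff ℝ ((1 : ℕ∞) + 1) f := by
      exact_mod_cast hf
    exact_mod_cast (contDiff_succ_iff_deriv.mp h2).2.2
  have hfd : ∀ x, HasDerivAt f (deriv f x) x := fun x =>
    ((hf.differentiable (by norm_num)) x).hasDerivAt
  have hfd2 : ∀ x, HasDerivAt (deriv f) (deriv (deriv f) x) x := fun x =>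
    ((hf1'.differentiable one_ne_zero) x).hasDerivAt
  -- membership facts
  have htf : MemLp (fun x => Real.tanh x * f x) 2 (volume : Measure ℝ) := by
    refine hf0.of_le ((continuous_tanh'.mul hfc).aestronglyMeasurable) ?_
    filter_upwards with x
    simp only [Real.norm_eq_abs, abs_mul]
    calc |Real.tanh x| * |f x| ≤ 1 * |f x| :=
          mul_le_mul_of_nonneg_right (abs_tanh_le_one x) (abs_nonneg _)
      _ = |f x| := one_mul _
  have hLf : MemLp (fun x => (1 - 2 * Real.tanh x ^ 2) * f x) 2 (volume : Measure ℝ) := by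
    refine hf0.of_le (((continuous_const.sub
      ((continuous_const.mul (continuous_tanh'.pow 2)))).mul hfc).aestronglyMeasurable) ?_
    filter_upwards with x
    simp only [Real.norm_eq_abs, abs_mul]
    have h1 : |1 - 2 * Real.tanh x ^ 2| ≤ 1 := by
      have ht := abs_tanh_le_one x
      have ht2 : Real.tanh x ^ 2 ≤ 1 := by nlinarith [abs_nonneg (Real.tanh x), sq_abs (Real.tanh x)]
      have ht3 : 0 ≤ Real.tanh x ^ 2 := sq_nonneg _
      rw [abs_le]; constructor <;> nlinarith
    calc |1 - 2 * Real.tanh x ^ 2| * |f x| ≤ 1 * |f x| :=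
          mul_le_mul_of_nonneg_right h1 (abs_nonneg _)
      _ = |f x| := one_mul _
  have hsum : MemLp (fun x => deriv f x + Real.tanh x * f x) 2 (volume : Measure ℝ) :=
    hf1.add htf
  -- the potential function g
  set g : ℝ → ℝ := fun x => deriv f x * f x + Real.tanh x * f x ^ 2 with hg
  have hgd : ∀ x, HasDerivAt g
      ((deriv (deriv f) x + (1 - 2 * Real.tanh x ^ 2) * f x) * f x
        + (deriv f x + Real.tanh x * f x) ^ 2) x := by
    intro x
    have h1 : HasDerivAt (fun y => deriv f y * f y)
        (deriv (deriv f) x * f x + deriv f x * deriv f x) x := (hfd2 x).mul (hfd x)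
    have h2 : HasDerivAt (fun y => Real.tanh y * f y ^ 2)
        ((1 - Real.tanh x ^ 2) * f x ^ 2 + Real.tanh x * (2 * f x * deriv f x)) x := by
      have hsq : HasDerivAt (fun y => f y ^ 2) (2 * f x * deriv f x) x := by
        simpa [mul_comm, mul_assoc, pow_two] using ((hfd x).fun_pow 2)
      exact (hasDerivAt_tanh' x).mul hsq
    have := h1.fun_add h2
    exact this.congr_deriv (by ring)
  -- integrability of g and its derivative
  have hgint : Integrable g (volume : Measure ℝ) := by
    have i1 : Integrable (fun x => deriv f x * f x) volume := integrable_mul_L2 hf1 hf0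
    have i2 : Integrable (fun x => (Real.tanh x * f x) * f x) volume :=
      integrable_mul_L2 htf hf0
    have := i1.add i2
    refine this.congr ?_
    filter_upwards with x
    simp [hg]; ring
  have iL : Integrable (fun x => (deriv (deriv f) x + (1 - 2 * Real.tanh x ^ 2) * f x) * f x)
      volume := by
    have := integrable_mul_L2 (hf2.add hLf) hf0
    exact this
  have iSq : Integrable (fun x => (deriv f x + Real.tanh x * f x) ^ 2) volume := by
    have := integrable_mul_L2 hsum hsum
    refine this.congr ?_
    filter_upwards with x
    ring
  have hg'int : Integrable (fun x =>
      (deriv (deriv f) x + (1 - 2 * Real.tanh x ^ 2) * f x) * f x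
        + (deriv f x + Real.tanh x * f x) ^ 2) volume := iL.add iSq
  have hzero : (∫ x : ℝ, ((deriv (deriv f) x + (1 - 2 * Real.tanh x ^ 2) * f x) * f x
        + (deriv f x + Real.tanh x * f x) ^ 2)) = 0 :=
    integral_eq_zero_of_hasDerivAt_of_integrable hgd hg'int hgint
  rw [integral_add iL iSq] at hzero
  have hkey : (∫ x : ℝ, (deriv (deriv f) x + (1 - 2 * Real.tanh x ^ 2) * f x) * f x)
      = -∫ x : ℝ, (deriv f x + Real.tanh x * f x) ^ 2 := by linarith
  refine ⟨hkey, ?_⟩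
  rw [hkey]
  have : 0 ≤ ∫ x : ℝ, (deriv f x + Real.tanh x * f x) ^ 2 :=
    integral_nonneg fun x => sq_nonneg _
  linarith
end

section
/- The kernel of the operator L = ∂_xx + (1 - 2 tanh² x) on H²(ℝ) equals the kernel of ℓ = ∂_x + tanh(x), namely the span of x ↦ 1/cosh x. Consequently, the function sech(x) satisfies sech''(x) + (1 - 2 tanh² x) sech(x) = 0 for all x. -/
open Real MeasureTheory

private lemma cosh_ne (x : ℝ) : Real.cosh x ≠ 0 := (Real.cosh_pos x).ne'

private lemma hasDerivAt_sech (x : ℝ) :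
    HasDerivAt (fun y => 1 / Real.cosh y) (-(Real.sinh x / Real.cosh x ^ 2)) x := by
  have h := (hasDerivAt_const x (1:ℝ)).div (Real.hasDerivAt_cosh x) (cosh_ne x)
  refine h.congr_deriv (Eq.symm ?_)
  field_simp
  ring

private lemma deriv_sech :
    deriv (fun y => 1 / Real.cosh y) = fun x => -(Real.sinh x / Real.cosh x ^ 2) :=
  funext fun x => (hasDerivAt_sech x).deriv

private lemma hasDerivAt_sech1 (x : ℝ) :
    HasDerivAt (fun y => Real.sinh y / Real.cosh y ^ 2)
      ((Real.cosh x * Real.cosh x ^ 2 - Real.sinh x * (2 * Real.cosh x * Real.sinh x))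
        / (Real.cosh x ^ 2) ^ 2) x := by
  have hc : HasDerivAt (fun y => Real.cosh y ^ 2) (2 * Real.cosh x * Real.sinh x) x := by
    have := (Real.hasDerivAt_cosh x).pow 2
    refine this.congr_deriv (Eq.symm ?_); ring
  exact (Real.hasDerivAt_sinh x).div hc (pow_ne_zero 2 (cosh_ne x))

private lemma core (x : ℝ) :
    -((Real.cosh x * Real.cosh x ^ 2 - Real.sinh x * (2 * Real.cosh x * Real.sinh x))
        / (Real.cosh x ^ 2) ^ 2)
      + (1 - 2 * Real.tanh x ^ 2) * (1 / Real.cosh x) = 0 := by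
  rw [Real.tanh_eq_sinh_div_cosh]
  have h := Real.cosh_sq_sub_sinh_sq x
  have hc := cosh_ne x
  field_simp
  nlinarith [h, Real.cosh_pos x]

private lemma sechL (x : ℝ) :
    deriv (deriv (fun y => 1 / Real.cosh y)) x
      + (1 - 2 * Real.tanh x ^ 2) * (1 / Real.cosh x) = 0 := by
  rw [deriv_sech]
  have h : deriv (fun y => -(Real.sinh y / Real.cosh y ^ 2)) x
      = -((Real.cosh x * Real.cosh x ^ 2 - Real.sinh x * (2 * Real.cosh x * Real.sinh x))
        / (Real.cosh x ^ 2) ^ 2) := ((hasDerivAt_sech1 x).neg).deriv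
  rw [h]
  exact core x

private lemma scaleL (c : ℝ) (x : ℝ) :
    deriv (deriv (fun y => c * (1 / Real.cosh y))) x
      + (1 - 2 * Real.tanh x ^ 2) * (c * (1 / Real.cosh x)) = 0 := by
  have h1 : deriv (fun y => c * (1 / Real.cosh y))
      = fun y => c * -(Real.sinh y / Real.cosh y ^ 2) :=
    funext fun y => ((hasDerivAt_sech y).const_mul c).deriv
  rw [h1]
  have h2 : deriv (fun y => c * -(Real.sinh y / Real.cosh y ^ 2)) x
      = c * -((Real.cosh x * Real.cosh x ^ 2 - Real.sinh x * (2 * Real.cosh x * Real.sinh x))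
        / (Real.cosh x ^ 2) ^ 2) := (((hasDerivAt_sech1 x).neg).const_mul c).deriv
  rw [h2]
  have h := core x
  linear_combination c * h

/-- `ℓ f = 0` implies `f = f 0 · sech`. -/
private lemma ell_to_sech (f : ℝ → ℝ) (hdf : Differentiable ℝ f)
    (hl : ∀ x : ℝ, deriv f x + Real.tanh x * f x = 0) :
    ∀ x : ℝ, f x = f 0 * (1 / Real.cosh x) := by
  have hgd : ∀ x, HasDerivAt (fun y => f y * Real.cosh y) 0 x := by
    intro x
    have h := ((hdf x).hasDerivAt).mul (Real.hasDerivAt_cosh x)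
    refine h.congr_deriv (Eq.symm ?_)
    have hw := hl x
    rw [Real.tanh_eq_sinh_div_cosh] at hw
    have hc := cosh_ne x
    field_simp at hw
    linear_combination -hw
  intro x
  have h := is_const_of_deriv_eq_zero (f := fun y => f y * Real.cosh y)
    (fun y => (hgd y).differentiableAt) (fun y => (hgd y).deriv) x 0
  simp only [Real.cosh_zero, mul_one] at h
  have hc := cosh_ne x
  field_simp
  linarith [h]

/-- The hard direction: an `L²` solution of `L f = 0` is `f 0 · sech`. -/
private lemma hard (f : ℝ → ℝ) (hf : ContDiff ℝ 2 f) (hL2 : MemLp f 2 (volume : Measure ℝ))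
    (hODE : ∀ x : ℝ, deriv (deriv f) x + (1 - 2 * Real.tanh x ^ 2) * f x = 0) :
    ∀ x : ℝ, f x = f 0 * (1 / Real.cosh x) := by
  have hdf : Differentiable ℝ f := hf.differentiable (by norm_num)
  have hdf' : Differentiable ℝ (deriv f) := by
    have h : ContDiff ℝ ((1:WithTop ℕ∞)+1) f := by exact_mod_cast hf
    exact (contDiff_succ_iff_deriv.mp h).2.2.differentiable (by norm_num)
  -- Wronskian with sech is constant
  have hWd : ∀ x, HasDerivAt
      (fun y => deriv f y * (1 / Real.cosh y) + f y * (Real.sinh y / Real.cosh y ^ 2)) 0 x := by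
    intro x
    have h1 : HasDerivAt (deriv f) (deriv (deriv f) x) x := (hdf' x).hasDerivAt
    have h2 : HasDerivAt f (deriv f x) x := (hdf x).hasDerivAt
    have h := (h1.mul (hasDerivAt_sech x)).add (h2.mul (hasDerivAt_sech1 x))
    refine h.congr_deriv (Eq.symm ?_)
    have hO : deriv (deriv f) x = -((1 - 2 * Real.tanh x ^ 2) * f x) := by linarith [hODE x]
    rw [hO, Real.tanh_eq_sinh_div_cosh]
    have hc := cosh_ne x
    field_simp
    ring
  set d := deriv f 0 with hd
  have hWconst : ∀ x,
      deriv f x * (1 / Real.cosh x) + f x * (Real.sinh x / Real.cosh x ^ 2) = d := by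
    intro x
    have h := is_const_of_deriv_eq_zero
      (f := fun y => deriv f y * (1 / Real.cosh y) + f y * (Real.sinh y / Real.cosh y ^ 2))
      (fun y => (hWd y).differentiableAt) (fun y => (hWd y).deriv) x 0
    simpa [Real.cosh_zero, Real.sinh_zero] using h
  -- g x = f x cosh x - d (sinh x cosh x + x)/2 is constant
  have hgd : ∀ x, HasDerivAt
      (fun y => f y * Real.cosh y - d * ((Real.sinh y * Real.cosh y + y) / 2)) 0 x := by
    intro x
    have h2 : HasDerivAt f (deriv f x) x := (hdf x).hasDerivAt
    have hG : HasDerivAt (fun y => (Real.sinh y * Real.cosh y + y) / 2)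
        ((Real.cosh x * Real.cosh x + Real.sinh x * Real.sinh x + 1) / 2) x :=
      ((((Real.hasDerivAt_sinh x).mul (Real.hasDerivAt_cosh x)).add (hasDerivAt_id x))).div_const 2
    have h := (h2.mul (Real.hasDerivAt_cosh x)).sub (hG.const_mul d)
    refine h.congr_deriv (Eq.symm ?_)
    have hw := hWconst x
    have hc := cosh_ne x
    have hs := Real.cosh_sq_sub_sinh_sq x
    field_simp at hw
    have hf' : deriv f x * Real.cosh x = d * Real.cosh x ^ 2 - f x * Real.sinh x := by
      have hmm : (deriv f x * Real.cosh x + f x * Real.sinh x) * Real.cosh x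
          = (d * Real.cosh x ^ 2) * Real.cosh x := by linear_combination Real.cosh x * hw
      have h9 := mul_right_cancel₀ hc hmm
      linarith [h9]
    linear_combination (-1 : ℝ) * hf' - d / 2 * hs
  have hg : ∀ x, f x * Real.cosh x - d * ((Real.sinh x * Real.cosh x + x) / 2) = f 0 := by
    intro x
    have h := is_const_of_deriv_eq_zero
      (f := fun y => f y * Real.cosh y - d * ((Real.sinh y * Real.cosh y + y) / 2))
      (fun y => (hgd y).differentiableAt) (fun y => (hgd y).deriv) x 0
    simpa [Real.cosh_zero, Real.sinh_zero] using h
  -- d = 0, otherwise f is not L²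
  have hd0 : d = 0 := by
    by_contra hne
    have hdpos : 0 < |d| := abs_pos.mpr hne
    set M : ℝ := Real.arsinh (2 * (|f 0| + 1) / |d|) with hM
    have hMs : Real.sinh M = 2 * (|f 0| + 1) / |d| := Real.sinh_arsinh _
    have hbound : ∀ x, M ≤ x → 1 ≤ |f x| := by
      intro x hx
      have hgx := hg x
      have hc := Real.cosh_pos x
      have hc1 : (1:ℝ) ≤ Real.cosh x := Real.one_le_cosh x
      have hsx : Real.sinh M ≤ Real.sinh x := Real.sinh_le_sinh.mpr hx
      have hM0 : 0 ≤ M := Real.arsinh_nonneg_iff.mpr (by positivity)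
      have hx0 : 0 ≤ x := le_trans hM0 hx
      have hsh : 0 ≤ Real.sinh x := Real.sinh_nonneg_iff.mpr hx0
      have habs : |d| * ((Real.sinh x * Real.cosh x + x) / 2)
          ≤ |f x| * Real.cosh x + |f 0| := by
        have e1 : d * ((Real.sinh x * Real.cosh x + x) / 2) = f x * Real.cosh x - f 0 := by
          linarith [hgx]
        have hA : 0 ≤ (Real.sinh x * Real.cosh x + x) / 2 := by
          have : 0 ≤ Real.sinh x * Real.cosh x := mul_nonneg hsh hc.le
          linarith
        have e2 : |d| * ((Real.sinh x * Real.cosh x + x) / 2)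
            = |d * ((Real.sinh x * Real.cosh x + x) / 2)| := by
          rw [abs_mul, abs_of_nonneg hA]
        rw [e2, e1, sub_eq_add_neg]
        calc |f x * Real.cosh x + -f 0| ≤ |f x * Real.cosh x| + |(-f 0)| := abs_add_le _ _
          _ = |f x| * Real.cosh x + |f 0| := by rw [abs_mul, abs_of_pos hc, abs_neg]
      have hmul : 2 * (|f 0| + 1) * Real.cosh x ≤ |d| * Real.sinh x * Real.cosh x := by
        have h1 : 2 * (|f 0| + 1) ≤ |d| * Real.sinh x := by
          calc 2 * (|f 0| + 1) = |d| * Real.sinh M := by rw [hMs]; field_simp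
            _ ≤ |d| * Real.sinh x := mul_le_mul_of_nonneg_left hsx hdpos.le
        exact mul_le_mul_of_nonneg_right h1 hc.le
      have hxterm : 0 ≤ |d| * (x / 2) := by positivity
      have h5 : Real.cosh x ≤ |f x| * Real.cosh x := by
        nlinarith [habs, hmul, hxterm, abs_nonneg (f 0), hc1]
      exact le_of_mul_le_mul_right (by linarith) hc
    -- contradiction with L²
    have hres : MemLp f 2 (volume.restrict (Set.Ici M)) := hL2.restrict _
    have hconst : MemLp (fun _ : ℝ => (1:ℝ)) 2 (volume.restrict (Set.Ici M)) := by
      refine hres.mono aestronglyMeasurable_const ?_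
      filter_upwards [ae_restrict_mem measurableSet_Ici] with x hx
      simpa [Real.norm_eq_abs] using hbound x hx
    have hμ : (volume.restrict (Set.Ici M)) ≠ 0 := by
      simp [Measure.restrict_eq_zero, Real.volume_Ici]
    have := hconst.2
    rw [eLpNorm_const (1:ℝ) (by norm_num) hμ] at this
    simp [Measure.restrict_apply, Real.volume_Ici, ENNReal.top_rpow_of_pos] at this
  -- conclude
  intro x
  have hgx := hg x
  rw [hd0] at hgx
  have hc := cosh_ne x
  field_simp at hgx ⊢
  linarith [hgx]

/-- The kernel of `L = ∂ₓₓ + (1 - 2 tanh² x)` on `H²(ℝ)` equals the kernel of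
`ℓ = ∂ₓ + tanh x`, namely the span of `x ↦ 1/cosh x`; in particular
`sech'' + (1 - 2 tanh²) sech = 0`. -/
theorem ker_L_eq_ker_ell :
    (∀ f : ℝ → ℝ, ContDiff ℝ 2 f →
      MemLp f 2 (volume : Measure ℝ) →
      MemLp (deriv f) 2 (volume : Measure ℝ) →
      MemLp (deriv (deriv f)) 2 (volume : Measure ℝ) →
      (((∀ x : ℝ, deriv (deriv f) x + (1 - 2 * Real.tanh x ^ 2) * f x = 0) ↔
        (∀ x : ℝ, deriv f x + Real.tanh x * f x = 0)) ∧
       ((∀ x : ℝ, deriv (deriv f) x + (1 - 2 * Real.tanh x ^ 2) * f x = 0) ↔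
        ∃ c : ℝ, ∀ x : ℝ, f x = c * (1 / Real.cosh x)))) ∧
    (∀ x : ℝ, deriv (deriv (fun y => 1 / Real.cosh y)) x
        + (1 - 2 * Real.tanh x ^ 2) * (1 / Real.cosh x) = 0) := by
  constructor
  · intro f hf hL2 _ _
    have hdf : Differentiable ℝ f := hf.differentiable (by norm_num)
    constructor
    · constructor
      · intro hODE x
        have hfe : f = fun y => f 0 * (1 / Real.cosh y) := funext (hard f hf hL2 hODE)
        rw [hfe]
        have h1 : deriv (fun y => f 0 * (1 / Real.cosh y)) x
            = f 0 * -(Real.sinh x / Real.cosh x ^ 2) :=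
          ((hasDerivAt_sech x).const_mul (f 0)).deriv
        rw [h1, Real.tanh_eq_sinh_div_cosh]
        have hc := cosh_ne x
        field_simp
        ring
      · intro hl x
        have hfe : f = fun y => f 0 * (1 / Real.cosh y) := funext (ell_to_sech f hdf hl)
        rw [hfe]
        exact scaleL (f 0) x
    · constructor
      · intro hODE
        exact ⟨f 0, hard f hf hL2 hODE⟩
      · rintro ⟨c, hc⟩ x
        have hfe : f = fun y => c * (1 / Real.cosh y) := funext hc
        rw [hfe]
        exact scaleL c x
  · exact sechL
end
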